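/- Let L ⊆ ℝ² be a symmetric convex body with associated norm ‖·‖_L, and let x, y be boundary points of L (‖x‖_L = ‖y‖_L = 1) such that there exist subgradients g_x ∈ ∂F_0(x) and g_y ∈ ∂F_0(y) that span ℝ². Then for every boundary point z of L there exist a set P ⊆ {x, −x, y, −y, z} and a probability weight W on P with W(z) > 0 such that 0 is a geometric median: 0 ∈ GM_L(W). -/

import Mathlib

open scoped RealInnerProductSpace

/-- The objective function `F_{L,W}` of the geometric median problem:
`ξ ↦ ∑_{p ∈ P} W p * ‖ξ - p‖_L`, where `‖·‖_L` is the Minkowski gauge of `L`. -/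
noncomputable def medianObj {n : ℕ} (L : Set (EuclideanSpace ℝ (Fin n)))
    (P : Finset (EuclideanSpace ℝ (Fin n))) (W : EuclideanSpace ℝ (Fin n) → ℝ)
    (ξ : EuclideanSpace ℝ (Fin n)) : ℝ :=
  ∑ p ∈ P, W p * gauge L (ξ - p)

/-- The geometric median `GM_L(W)`: the set of global minimizers of `F_{L,W}`. -/
def geomMedian {n : ℕ} (L : Set (EuclideanSpace ℝ (Fin n)))
    (P : Finset (EuclideanSpace ℝ (Fin n))) (W : EuclideanSpace ℝ (Fin n) → ℝ) :
    Set (EuclideanSpace ℝ (Fin n)) :=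
  {ξ | ∀ η, medianObj L P W ξ ≤ medianObj L P W η}

/-- A symmetric convex body: compact, convex, with nonempty interior, and `L = -L`. -/
def IsSymmConvexBody {n : ℕ} (L : Set (EuclideanSpace ℝ (Fin n))) : Prop :=
  Convex ℝ L ∧ IsCompact L ∧ (interior L).Nonempty ∧ L = -L

/-- The subdifferential of `f : ℝⁿ → ℝ` at `ξ`. -/
def subdiff {n : ℕ} (f : EuclideanSpace ℝ (Fin n) → ℝ) (ξ : EuclideanSpace ℝ (Fin n)) :
    Set (EuclideanSpace ℝ (Fin n)) :=
  {g | ∀ y, f ξ + ⟪g, y - ξ⟫ ≤ f y}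

/-!
A subgradient `g` of the gauge at `p` gives
`gauge (η - p) = gauge (p - η) ≥ gauge p - ⟪g, η⟫`, so `0` minimizes `∑ w p * gauge (· - p)`
as soon as the subgradients balance: `∑ w p • g p = 0`. Subgradients at `±x`, `±y` are
`±gx`, `±gy`, and Hahn–Banach gives one at `z`, `gz = α gx + β gy`. The weights
`e α⁻, e α⁺, e β⁻, e β⁺, e` on `x, -x, y, -y, z` balance them, and `e = (1 + |α| + |β|)⁻¹`
makes them sum to `1`.
-/

open Finset

theorem exists_linearMap_eq_gauge_le {E : Type*} [AddCommGroup E] [Module ℝ E] {s : Set E}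
    (hconv : Convex ℝ s) (habs : Absorbent ℝ s) (z : E) :
    ∃ φ : E →ₗ[ℝ] ℝ, φ z = gauge s z ∧ ∀ v, φ v ≤ gauge s v := by
  let φ₀ : E →ₗ.[ℝ] ℝ := LinearPMap.mkSpanSingleton' z (gauge s z) fun c hc => by
    rcases smul_eq_zero.mp hc with rfl | rfl <;> simp
  have hφ₀ : ∀ v : φ₀.domain, φ₀ v ≤ gauge s v := by
    rintro ⟨v, hv⟩
    obtain ⟨c, rfl⟩ := Submodule.mem_span_singleton.mp hv
    rw [LinearPMap.mkSpanSingleton'_apply, smul_eq_mul]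
    rcases le_or_gt 0 c with hc | hc
    · rw [gauge_smul_of_nonneg hc, smul_eq_mul, RingHom.id_apply]
    · exact (mul_nonpos_of_nonpos_of_nonneg hc.le (gauge_nonneg z)).trans (gauge_nonneg _)
  obtain ⟨φ, hφz, hφ⟩ := exists_extension_of_le_sublinear φ₀ (gauge s)
    (fun c hc v => gauge_smul_of_nonneg hc.le v) (gauge_add_le hconv habs) hφ₀
  exact ⟨φ, (hφz ⟨z, Submodule.mem_span_singleton_self z⟩).trans
    (LinearPMap.mkSpanSingleton'_apply_self _ _ _ _), hφ⟩

section Subgradient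

variable {n : ℕ}

theorem neg_mem_subdiff_neg {f : EuclideanSpace ℝ (Fin n) → ℝ} (hf : ∀ v, f (-v) = f v)
    {g p : EuclideanSpace ℝ (Fin n)} (hg : g ∈ subdiff f p) : -g ∈ subdiff f (-p) := by
  intro v
  have h := hg (-v)
  rw [hf, show -v - p = -(v - -p) by abel, inner_neg_right] at h
  rwa [hf, inner_neg_left]

theorem exists_mem_subdiff_gauge {L : Set (EuclideanSpace ℝ (Fin n))} (hconv : Convex ℝ L)
    (habs : Absorbent ℝ L) (z : EuclideanSpace ℝ (Fin n)) : ∃ g, g ∈ subdiff (gauge L) z := by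
  obtain ⟨φ, hφz, hφ⟩ := exists_linearMap_eq_gauge_le hconv habs z
  refine ⟨(InnerProductSpace.toDual ℝ _).symm (LinearMap.toContinuousLinearMap φ), fun v => ?_⟩
  simp only [InnerProductSpace.toDual_symm_apply, inner_sub_right,
    LinearMap.coe_toContinuousLinearMap', hφz]
  linarith [hφ v]

end Subgradient

namespace IsSymmConvexBody

variable {n : ℕ} {L : Set (EuclideanSpace ℝ (Fin n))}

theorem neg_mem (hL : IsSymmConvexBody L) {v : EuclideanSpace ℝ (Fin n)} (hv : v ∈ L) :
    -v ∈ L := by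
  rw [hL.2.2.2] at hv
  exact Set.mem_neg.mp hv

theorem zero_mem_interior (hL : IsSymmConvexBody L) : 0 ∈ interior L := by
  obtain ⟨u, hu⟩ := hL.2.2.1
  have hneg : -u ∈ interior L :=
    interior_maximal (fun v hv => by simpa using hL.neg_mem (interior_subset hv))
      isOpen_interior.neg (Set.neg_mem_neg.mpr hu)
  simpa using hL.1.interior hu hneg (by norm_num : (0 : ℝ) ≤ 1 / 2) (by norm_num : (0 : ℝ) ≤ 1 / 2)
    (add_halves 1)

theorem absorbent (hL : IsSymmConvexBody L) : Absorbent ℝ L :=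
  absorbent_nhds_zero (mem_interior_iff_mem_nhds.mp hL.zero_mem_interior)

theorem gauge_neg (hL : IsSymmConvexBody L) (v : EuclideanSpace ℝ (Fin n)) :
    gauge L (-v) = gauge L v :=
  _root_.gauge_neg (fun _ => hL.neg_mem) v

end IsSymmConvexBody

section FiberWeight

variable {ι α : Type*} [DecidableEq α]

def fiberWeight (s : Finset ι) (p : ι → α) (w : ι → ℝ) (q : α) : ℝ :=
  ∑ i ∈ s with p i = q, w i

variable {s : Finset ι} {p : ι → α} {w : ι → ℝ}

theorem sum_fiberWeight_mul (f : α → ℝ) :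
    ∑ q ∈ s.image p, fiberWeight s p w q * f q = ∑ i ∈ s, w i * f (p i) := by
  simp_rw [fiberWeight, sum_mul]
  rw [← sum_fiberwise_of_maps_to (fun i hi => mem_image_of_mem p hi)]
  refine sum_congr rfl fun q _ => sum_congr rfl fun i hi => ?_
  rw [(mem_filter.mp hi).2]

theorem sum_fiberWeight : ∑ q ∈ s.image p, fiberWeight s p w q = ∑ i ∈ s, w i := by
  simpa using sum_fiberWeight_mul (s := s) (p := p) (w := w) (fun _ => 1)

theorem fiberWeight_nonneg (hw : ∀ i ∈ s, 0 ≤ w i) (q : α) : 0 ≤ fiberWeight s p w q :=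
  sum_nonneg fun i hi => hw i (mem_filter.mp hi).1

theorem le_fiberWeight (hw : ∀ i ∈ s, 0 ≤ w i) {i : ι} (hi : i ∈ s) :
    w i ≤ fiberWeight s p w (p i) :=
  single_le_sum (fun j hj => hw j (mem_filter.mp hj).1) (mem_filter.mpr ⟨hi, rfl⟩)

end FiberWeight

theorem zero_mem_geomMedian_image {n : ℕ} {ι : Type*}
    [DecidableEq (EuclideanSpace ℝ (Fin n))] {L : Set (EuclideanSpace ℝ (Fin n))}
    (hL : ∀ v, gauge L (-v) = gauge L v) (s : Finset ι)
    {p g : ι → EuclideanSpace ℝ (Fin n)} {w : ι → ℝ}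
    (hg : ∀ i ∈ s, g i ∈ subdiff (gauge L) (p i)) (hw : ∀ i ∈ s, 0 ≤ w i)
    (hbalance : ∑ i ∈ s, w i • g i = 0) :
    0 ∈ geomMedian L (s.image p) (fiberWeight s p w) := by
  intro η
  simp only [medianObj, sum_fiberWeight_mul]
  calc ∑ i ∈ s, w i * gauge L (0 - p i)
      = ∑ i ∈ s, w i * gauge L (p i) - ⟪∑ i ∈ s, w i • g i, η⟫ := by simp [hL, hbalance]
    _ = ∑ i ∈ s, w i * (gauge L (p i) + ⟪g i, (p i - η) - p i⟫) := by
        simp [sum_inner, real_inner_smul_left, mul_add, sum_add_distrib, sub_eq_add_neg]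
    _ ≤ ∑ i ∈ s, w i * gauge L (p i - η) :=
        sum_le_sum fun i hi => mul_le_mul_of_nonneg_left (hg i hi _) (hw i hi)
    _ = ∑ i ∈ s, w i * gauge L (η - p i) := by simp only [← hL (η - _), neg_sub]

theorem zero_is_geomMedian_of_spanning_subgradients_general
    (L : Set (EuclideanSpace ℝ (Fin 2))) (hL : IsSymmConvexBody L)
    (x y : EuclideanSpace ℝ (Fin 2))
    (gx gy : EuclideanSpace ℝ (Fin 2))
    (hgx : gx ∈ subdiff (gauge L) x) (hgy : gy ∈ subdiff (gauge L) y)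
    (hspan : Submodule.span ℝ {gx, gy} = ⊤)
    (z : EuclideanSpace ℝ (Fin 2)) :
    ∃ (P : Finset (EuclideanSpace ℝ (Fin 2))) (W : EuclideanSpace ℝ (Fin 2) → ℝ),
      (P : Set (EuclideanSpace ℝ (Fin 2))) ⊆ {x, -x, y, -y, z} ∧
      (∀ p ∈ P, 0 ≤ W p) ∧ (∑ p ∈ P, W p) = 1 ∧
      z ∈ P ∧ 0 < W z ∧
      (0 : EuclideanSpace ℝ (Fin 2)) ∈ geomMedian L P W := by
  classical
  obtain ⟨gz, hgz⟩ := exists_mem_subdiff_gauge hL.1 hL.absorbent z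
  obtain ⟨α, β, hαβ⟩ := Submodule.mem_span_pair.mp (hspan ▸ Submodule.mem_top : gz ∈ _)
  set e := (1 + |α| + |β|)⁻¹
  have he : 0 < e := by positivity
  let p := ![x, -x, y, -y, z]
  let g := ![gx, -gx, gy, -gy, gz]
  let w := ![e * α⁻, e * α⁺, e * β⁻, e * β⁺, e]
  have hw : ∀ i ∈ univ, 0 ≤ w i := by
    intro i _; fin_cases i <;> simp [w] <;> positivity
  have hg : ∀ i ∈ univ, g i ∈ subdiff (gauge L) (p i) := by
    intro i _
    fin_cases i
    exacts [hgx, neg_mem_subdiff_neg hL.gauge_neg hgx, hgy,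
      neg_mem_subdiff_neg hL.gauge_neg hgy, hgz]
  refine ⟨univ.image p, fiberWeight univ p w, ?_, fun q _ => fiberWeight_nonneg hw q, ?_,
    mem_image_of_mem p (mem_univ 4), he.trans_le (le_fiberWeight hw (mem_univ 4)),
    zero_mem_geomMedian_image hL.gauge_neg univ hg hw ?_⟩
  · intro q hq
    obtain ⟨i, -, rfl⟩ := mem_image.mp hq
    fin_cases i <;> simp [p]
  · rw [sum_fiberWeight, Fin.sum_univ_five]
    simp only [w, Matrix.cons_val]
    calc _ = e * (1 + |α| + |β|) := by
          rw [← posPart_add_negPart α, ← posPart_add_negPart β]; ring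
      _ = 1 := inv_mul_cancel₀ (by positivity)
  · rw [Fin.sum_univ_five]
    simp only [w, g, ← hαβ, Matrix.cons_val]
    linear_combination (norm := module)
      (-e) • (posPart_sub_negPart α • gx + posPart_sub_negPart β • gy)

/-- Lemma 6: given boundary points `x, y` of `L ⊆ ℝ²` with subgradients spanning `ℝ²`,
for every boundary point `z` there is a probability weight `W` supported on
`P ⊆ {±x, ±y, z}` with `W z > 0` such that `0` is a geometric median. -/
theorem zero_is_geomMedian_of_spanning_subgradients
    (L : Set (EuclideanSpace ℝ (Fin 2))) (hL : IsSymmConvexBody L)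
    (x y : EuclideanSpace ℝ (Fin 2)) (hx : gauge L x = 1) (hy : gauge L y = 1)
    (gx gy : EuclideanSpace ℝ (Fin 2))
    (hgx : gx ∈ subdiff (gauge L) x) (hgy : gy ∈ subdiff (gauge L) y)
    (hspan : Submodule.span ℝ {gx, gy} = ⊤)
    (z : EuclideanSpace ℝ (Fin 2)) (hz : gauge L z = 1) :
    ∃ (P : Finset (EuclideanSpace ℝ (Fin 2))) (W : EuclideanSpace ℝ (Fin 2) → ℝ),
      (P : Set (EuclideanSpace ℝ (Fin 2))) ⊆ {x, -x, y, -y, z} ∧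
      (∀ p ∈ P, 0 ≤ W p) ∧ (∑ p ∈ P, W p) = 1 ∧
      z ∈ P ∧ 0 < W z ∧
      (0 : EuclideanSpace ℝ (Fin 2)) ∈ geomMedian L P W :=
  zero_is_geomMedian_of_spanning_subgradients_general L hL x y gx gy hgx hgy hspan z
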